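/- Let q be a prime number. If A and B are q-element finite sets of natural numbers such that every natural number k with k < q^2 can be written uniquely as a + b with a ∈ A and b ∈ B, then either A = {0, 1, …, q−1} and B = {0, q, 2q, …, q(q−1)}, or A = {0, q, 2q, …, q(q−1)} and B = {0, 1, …, q−1}. In particular, up to swapping A and B there is exactly one solution. -/

import Mathlib

/-!
Encode `s ⊆ ℕ` by its generating polynomial `∑_{a ∈ s} X ^ a`. Unique representability says
exactly that `P_A * P_B = 1 + X + ⋯ + X ^ (q² - 1)`, which for prime `q` is the product of the
cyclotomic polynomials `Φ_q = 1 + X + ⋯ + X ^ (q - 1)` and `Φ_{q²} = Φ_q(X ^ q)`, both irreducible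
over `ℚ`. Neither `P_A` nor `P_B` is constant, so unique factorisation gives
`{P_A, P_B} = {Φ_q, Φ_{q²}}` up to units, and the constant coefficient `1` (as `0 ∈ A, B`) fixes
the units.
-/

open Polynomial Finset

theorem Finset.bijOn_of_existsUnique_of_card_le {α β : Type*} {s : Finset α} {t : Finset β}
    {f : α → β} (h : ∀ y ∈ t, ∃! x, x ∈ s ∧ f x = y) (hcard : #s ≤ #t) :
    Set.BijOn f s t := by
  classical
  set s' := s.filter (f · ∈ t)
  have hinj : Set.InjOn f s' := fun x hx x' hx' hxx' => by
    simp only [coe_filter, Set.mem_ofPred_eq, s'] at hx hx'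
    exact (h _ hx.2).unique ⟨hx.1, rfl⟩ ⟨hx'.1, hxx'.symm⟩
  have hsurj : Set.SurjOn f s' t := fun y hy => by
    obtain ⟨x, ⟨hx, rfl⟩, -⟩ := h y hy
    exact ⟨x, mem_filter.mpr ⟨hx, hy⟩, rfl⟩
  have hs' : s' = s := eq_of_subset_of_card_le (filter_subset _ _) <|
    hcard.trans (card_nbij f (fun x hx => (mem_filter.mp hx).2) hinj hsurj).ge
  rw [← hs']
  exact ⟨fun x hx => (mem_filter.mp hx).2, hinj, hsurj⟩

theorem geom_sum_mul_geom_sum_pow {R : Type*} [CommSemiring R] (x : R) (n m : ℕ) :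
    (∑ i ∈ range n, x ^ i) * ∑ j ∈ range m, (x ^ n) ^ j = ∑ k ∈ range (n * m), x ^ k := by
  induction m with
  | zero => simp
  | succ m ih =>
    rw [sum_range_succ, mul_add, ih, Nat.mul_succ, sum_range_add, sum_mul]
    simp only [← pow_mul, ← pow_add, add_comm]

noncomputable def genPoly (R : Type*) [Semiring R] (s : Finset ℕ) : R[X] := ∑ a ∈ s, X ^ a

section genPoly

variable {R : Type*}

theorem coeff_genPoly [Semiring R] (s : Finset ℕ) (n : ℕ) :
    (genPoly R s).coeff n = if n ∈ s then 1 else 0 := by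
  simp [genPoly, coeff_X_pow]

theorem genPoly_injective [Semiring R] [Nontrivial R] : Function.Injective (genPoly R) := by
  intro s t hst
  ext n
  have := congrArg (coeff · n) hst
  simp only [coeff_genPoly] at this
  split_ifs at this <;> simp_all

theorem genPoly_mul_genPoly [Semiring R] {A B : Finset ℕ} {N : ℕ}
    (hAB : Set.BijOn (fun p : ℕ × ℕ => p.1 + p.2) (A ×ˢ B : Finset (ℕ × ℕ)) (range N)) :
    genPoly R A * genPoly R B = genPoly R (range N) := by
  rw [genPoly, genPoly, sum_mul_sum, ← sum_product', genPoly]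
  simp only [← pow_add]
  exact sum_nbij _ hAB.mapsTo hAB.injOn hAB.surjOn fun _ _ => rfl

theorem genPoly_image_mul_range [Semiring R] {n : ℕ} (hn : 0 < n) (m : ℕ) :
    genPoly R ((range m).image (n * ·)) = ∑ j ∈ range m, (X ^ n) ^ j := by
  rw [genPoly, sum_image fun _ _ _ _ h => Nat.eq_of_mul_eq_mul_left hn h]
  simp only [pow_mul]

theorem not_isUnit_genPoly [Semiring R] [Nontrivial R] [NoZeroDivisors R] {s : Finset ℕ}
    (hs : 1 < #s) :
    ¬IsUnit (genPoly R s) := by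
  obtain ⟨a, ha, ha0⟩ := exists_mem_ne hs 0
  intro hu
  have := coeff_eq_zero_of_natDegree_lt (natDegree_eq_zero_of_isUnit hu ▸ Nat.pos_of_ne_zero ha0)
  simp [coeff_genPoly, ha] at this

theorem eq_of_associated_genPoly [CommSemiring R] [NoZeroDivisors R] [Nontrivial R]
    {s t : Finset ℕ} (hs : 0 ∈ s) (ht : 0 ∈ t) (h : Associated (genPoly R s) (genPoly R t)) :
    s = t := by
  obtain ⟨u, hu⟩ := h
  obtain ⟨c, -, hc⟩ := Polynomial.isUnit_iff.mp u.isUnit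
  have h0 := congrArg (coeff · 0) hu
  simp only [← hc, coeff_mul_C, coeff_genPoly, hs, ht, if_true, one_mul] at h0
  apply genPoly_injective (R := R)
  rw [← hu, ← hc, h0, map_one, mul_one]

end genPoly

section Associated

variable {α : Type*} [CommMonoidWithZero α] [IsLeftCancelMulZero α] {p q f g : α}

theorem associated_and_associated_of_mul_eq_mul_of_dvd (hf : f ≠ 0) (hg : Irreducible g)
    (hq : ¬IsUnit q) (h : p * q = f * g) (hfp : f ∣ p) : Associated p f ∧ Associated q g := by
  obtain ⟨r, rfl⟩ := hfp
  have hrq : g = r * q := mul_left_cancel₀ hf (by rw [← h, mul_assoc])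
  have hr : IsUnit r := (hg.isUnit_or_isUnit hrq).resolve_right hq
  exact ⟨(associated_mul_unit_right f r hr).symm, hrq ▸ (associated_unit_mul_left q r hr).symm⟩

theorem associated_or_associated_of_mul_eq_mul (hf : Prime f) (hg : Irreducible g)
    (hp : ¬IsUnit p) (hq : ¬IsUnit q) (h : p * q = f * g) :
    (Associated p f ∧ Associated q g) ∨ (Associated p g ∧ Associated q f) := by
  rcases hf.dvd_or_dvd ⟨g, h⟩ with hfp | hfq
  · exact .inl (associated_and_associated_of_mul_eq_mul_of_dvd hf.ne_zero hg hq h hfp)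
  · exact .inr (associated_and_associated_of_mul_eq_mul_of_dvd hf.ne_zero hg hp
      (by rw [mul_comm, h]) hfq).symm

end Associated

theorem prime_square_cell_unique_solution (q : ℕ) (hq : q.Prime)
    (A B : Finset ℕ) (hA : A.card = q) (hB : B.card = q)
    (h : ∀ k : ℕ, k < q^2 →
      ∃! p : ℕ × ℕ, p.1 ∈ A ∧ p.2 ∈ B ∧ p.1 + p.2 = k) :
    (A = Finset.range q ∧ B = (Finset.range q).image (fun i => q * i)) ∨
    (A = (Finset.range q).image (fun i => q * i) ∧ B = Finset.range q) := by
  have : Fact q.Prime := ⟨hq⟩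
  obtain ⟨⟨a, b⟩, ⟨hA0, hB0, hab⟩, -⟩ := h 0 (pow_pos hq.pos 2)
  obtain ⟨rfl, rfl⟩ := Nat.add_eq_zero_iff.mp hab
  have hAB : Set.BijOn (fun p : ℕ × ℕ => p.1 + p.2) (A ×ˢ B : Finset (ℕ × ℕ)) (range (q ^ 2)) :=
    bijOn_of_existsUnique_of_card_le
      (fun k hk => by simpa [and_assoc] using h k (mem_range.mp hk)) (by simp [hA, hB, sq])
  set M := (range q).image (fun i => q * i)
  have hRangeM : genPoly ℚ (range q) * genPoly ℚ M = genPoly ℚ (range (q ^ 2)) := by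
    rw [genPoly_image_mul_range hq.pos, genPoly, genPoly, geom_sum_mul_geom_sum_pow, sq]
  have hRange_irr : Irreducible (genPoly ℚ (range q)) := by
    rw [genPoly, ← cyclotomic_prime]
    exact cyclotomic.irreducible_rat hq.pos
  have hM_irr : Irreducible (genPoly ℚ M) := by
    have hM : genPoly ℚ M = cyclotomic (q ^ 2) ℚ := by
      rw [genPoly_image_mul_range hq.pos, cyclotomic_prime_pow_eq_geom_sum hq, pow_one]
    exact hM ▸ cyclotomic.irreducible_rat (pow_pos hq.pos 2)
  have hRange0 : 0 ∈ range q := mem_range.mpr hq.pos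
  have hM0 : 0 ∈ M := mem_image.mpr ⟨0, hRange0, mul_zero q⟩
  rcases associated_or_associated_of_mul_eq_mul hRange_irr.prime hM_irr
      (not_isUnit_genPoly (hA ▸ hq.one_lt)) (not_isUnit_genPoly (hB ▸ hq.one_lt))
      ((genPoly_mul_genPoly hAB).trans hRangeM.symm) with ⟨hA_range, hB_M⟩ | ⟨hA_M, hB_range⟩
  · exact .inl ⟨eq_of_associated_genPoly hA0 hRange0 hA_range,
      eq_of_associated_genPoly hB0 hM0 hB_M⟩
  · exact .inr ⟨eq_of_associated_genPoly hA0 hM0 hA_M,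
      eq_of_associated_genPoly hB0 hRange0 hB_range⟩
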